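/- Let X be an infinite-dimensional real Banach space with density character dens(X) = κ. Then there is a transfinite sequence (x_α, x_α*)_{α<κ} ⊆ X × X* such that x_α*(x_α) = 1 for all α < κ and x_α*(x_β) = 0 whenever β < α < κ. Moreover, hL(B_{X*}) = dens(X), where B_{X*} carries the weak* topology. -/

import Mathlib

open Cardinal Set Topology

universe u

noncomputable section

/-- The spread of a topological space: the supremum of cardinalities of discrete subspaces. -/
def spread (Z : Type u) [TopologicalSpace Z] : Cardinal.{u} :=
  ⨆ D : {D : Set Z // DiscreteTopology D}, #D.1

/-- The density of a topological space: the least cardinality of a dense subset. -/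
def densityCard (Z : Type u) [TopologicalSpace Z] : Cardinal.{u} :=
  ⨅ D : {D : Set Z // Dense D}, #D.1

/-- The hereditary density: the supremum of the densities of all subspaces. -/
def hdens (Z : Type u) [TopologicalSpace Z] : Cardinal.{u} :=
  ⨆ S : Set Z, densityCard S

/-- The Lindelöf degree: the least cardinal κ such that every open cover
has a subcover of cardinality at most κ. -/
def lindelofDeg (Z : Type u) [TopologicalSpace Z] : Cardinal.{u} :=
  sInf {κ | ∀ (ι : Type u) (U : ι → Set Z), (∀ i, IsOpen (U i)) → (⋃ i, U i) = Set.univ →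
    ∃ t : Set ι, #t ≤ κ ∧ (⋃ i ∈ t, U i) = Set.univ}

/-- The hereditary Lindelöf degree: the supremum of the Lindelöf degrees of all subspaces. -/
def hLindelof (Z : Type u) [TopologicalSpace Z] : Cardinal.{u} :=
  ⨆ S : Set Z, lindelofDeg S

/-- The closed unit ball of the dual of `X`, as a subset of the weak* dual (so that as a
topological subspace it carries the weak* topology). -/
def dualBall (X : Type u) [NormedAddCommGroup X] [NormedSpace ℝ X] : Set (WeakDual ℝ X) :=
  {f | ‖WeakDual.toStrongDual f‖ ≤ 1}

/-!
While fewer than `dens X` vectors have been chosen, their closed span is a proper subspace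
(otherwise their rational combinations would be a dense set of smaller cardinality), so
Hahn–Banach yields a new vector `x_α` and a functional `x*_α` with `x*_α(x_α) = 1` that kills all
earlier vectors; transfinite recursion gives the biorthogonal sequence.

Normalised, the `x*_α` form a right-separated family in `B_{X*}`: the weak*-open set
`{g | g(x_α) > 0}` contains `x*_α` but no later `x*_β`. For a regular `μ ≤ dens X` such a family
of length `μ` has Lindelöf degree `μ`, whence `hL(B_{X*}) ≥ dens X`. Conversely, on the bounded
set `B_{X*}` the weak* topology is already the topology of pointwise convergence on a dense set
`D`, so finite boxes with rational sides over points of `D` form a base of cardinality `dens X`.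
-/

lemma Cardinal.exists_isRegular_between {c κ : Cardinal} (hκ : ℵ₀ ≤ κ) (hc : c < κ) :
    ∃ μ, μ.IsRegular ∧ c < μ ∧ μ ≤ κ := by
  rcases lt_or_ge c ℵ₀ with hc₀ | hc₀
  · exact ⟨ℵ₀, isRegular_aleph0, hc₀, hκ⟩
  · exact ⟨Order.succ c, isRegular_succ hc₀, Order.lt_succ c, Order.succ_le_of_lt hc⟩

section CardinalFunctions

variable {Z : Type u} [TopologicalSpace Z]

variable (Z) in
lemma exists_dense_mk_eq_densityCard :
    ∃ D : Set Z, Dense D ∧ #D = densityCard Z := by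
  have : Nonempty {D : Set Z // Dense D} := ⟨⟨univ, dense_univ⟩⟩
  obtain ⟨D, hD⟩ := ciInf_mem fun D : {D : Set Z // Dense D} => #D.1
  exact ⟨D.1, D.2, hD⟩

lemma densityCard_le_mk_of_dense {D : Set Z} (hD : Dense D) : densityCard Z ≤ #D :=
  ciInf_le' (fun D : {D : Set Z // Dense D} => #D.1) ⟨D, hD⟩

lemma aleph0_le_densityCard [T1Space Z] [Infinite Z] : ℵ₀ ≤ densityCard Z := by
  obtain ⟨D, hD, hcard⟩ := exists_dense_mk_eq_densityCard Z
  rw [← hcard, aleph0_le_mk_iff, infinite_coe_iff]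
  intro hfin
  exact infinite_univ (hD.closure_eq ▸ hfin.isClosed.closure_eq ▸ hfin)

lemma lindelofDeg_le_of_isTopologicalBasis {ι : Type u} {b : ι → Set Z}
    (hb : TopologicalSpace.IsTopologicalBasis (range b)) : lindelofDeg Z ≤ #ι := by
  refine csInf_le' fun ι' U hU hcov => ?_
  have hsub : ∀ j : {j // ∃ i, b j ⊆ U i}, ∃ i, b j.1 ⊆ U i := fun j => j.2
  choose c hc using hsub
  refine ⟨range c, mk_range_le.trans (mk_subtype_le _), eq_univ_of_forall fun z => ?_⟩
  obtain ⟨i, hi⟩ := mem_iUnion.mp (hcov ▸ mem_univ z)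
  obtain ⟨_, ⟨j, rfl⟩, hzj, hjU⟩ := hb.exists_subset_of_mem_open hi (hU i)
  exact mem_biUnion ⟨⟨j, i, hjU⟩, rfl⟩ (hc _ hzj)

lemma hLindelof_le_of_isTopologicalBasis {ι : Type u} {b : ι → Set Z}
    (hb : TopologicalSpace.IsTopologicalBasis (range b)) : hLindelof Z ≤ #ι := by
  refine ciSup_le' fun S => lindelofDeg_le_of_isTopologicalBasis (b := fun i => (↑) ⁻¹' b i) ?_
  rw [range_comp']
  exact hb.isInducing IsInducing.subtypeVal

variable (Z) in
lemma exists_subcover_mk_le_lindelofDeg {ι : Type u}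
    (U : ι → Set Z) (hU : ∀ i, IsOpen (U i)) (hcov : ⋃ i, U i = Set.univ) :
    ∃ t : Set ι, #t ≤ lindelofDeg Z ∧ ⋃ i ∈ t, U i = Set.univ := by
  refine csInf_mem (s := {κ | ∀ (ι : Type u) (U : ι → Set Z), (∀ i, IsOpen (U i)) →
    ⋃ i, U i = Set.univ → ∃ t : Set ι, #t ≤ κ ∧ ⋃ i ∈ t, U i = Set.univ})
    ⟨#Z, fun ι U _ hcov => ?_⟩ ι U hU hcov
  have hcover : ∀ z : Z, ∃ i, z ∈ U i := fun z => mem_iUnion.mp (hcov ▸ mem_univ z)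
  choose c hc using hcover
  exact ⟨range c, mk_range_le, eq_univ_of_forall fun z => mem_biUnion ⟨z, rfl⟩ (hc z)⟩

lemma le_hLindelof_of_rightSeparated {μ : Cardinal.{u}} (hμ : μ.IsRegular)
    (y : μ.ord.ToType → Z) (V : μ.ord.ToType → Set Z) (hV : ∀ α, IsOpen (V α))
    (hyV : ∀ α, y α ∈ V α) (hsep : ∀ α β, α < β → y β ∉ V α) : μ ≤ hLindelof Z := by
  refine le_trans ?_ (le_ciSup bddAbove_of_small (range y))
  obtain ⟨t, ht, htcov⟩ := exists_subcover_mk_le_lindelofDeg (range y)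
    (fun α => (↑) ⁻¹' V α) (fun α => (hV α).preimage continuous_subtype_val)
    (eq_univ_of_forall fun ⟨_, α, hα⟩ => mem_iUnion.mpr ⟨α, by simp [← hα, hyV]⟩)
  by_contra! hlt
  -- `t` is too small to be cofinal in `μ.ord.ToType`, so some `y β` lies beyond all of `t`.
  have hcof : ¬ IsCofinal t := fun hcof => by
    have := (Order.cof_le hcof).trans ht
    rw [Ordinal.cof_toType, hμ.cof_ord] at this
    exact (this.trans_lt hlt).false
  simp only [IsCofinal, not_forall, not_exists, not_and, not_le] at hcof
  obtain ⟨β, hβ⟩ := hcof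
  obtain ⟨α, hαt, hyα⟩ := mem_iUnion₂.mp (htcov ▸ mem_univ (⟨y β, β, rfl⟩ : range y))
  exact hsep α β (hβ α hαt) hyα

end CardinalFunctions

lemma densityCard_le_mk_of_dense_span {E : Type u} [AddCommGroup E] [Module ℝ E]
    [TopologicalSpace E] [ContinuousAdd E] [ContinuousSMul ℝ E] {S : Set E} [Infinite S]
    (hS : Dense (Submodule.span ℝ S : Set E)) : densityCard E ≤ #S := by
  set T := range fun p : Σ n, Fin n → ℚ × S => ∑ i, ((p.2 i).1 : ℝ) • ((p.2 i).2 : E)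
  have hT : (Submodule.span ℝ S : Set E) ⊆ closure T := by
    intro m hm
    obtain ⟨n, c, g, rfl⟩ := Submodule.mem_span_set'.mp hm
    let φ : (Fin n → ℝ) → E := fun c => ∑ i, c i • (g i : E)
    have hφ : Continuous φ := by fun_prop
    have hc : c ∈ closure (range fun (q : Fin n → ℚ) i => (q i : ℝ)) :=
      DenseRange.piMap (fun _ => Rat.denseRange_cast) c
    show φ c ∈ closure T
    refine closure_mono ?_ (mem_closure_image hφ.continuousAt hc)
    rintro _ ⟨_, ⟨q, rfl⟩, rfl⟩
    exact ⟨⟨n, fun i => (q i, g i)⟩, rfl⟩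
  calc densityCard E ≤ #T := densityCard_le_mk_of_dense (dense_closure.mp (hS.mono hT))
    _ ≤ #(Σ n, Fin n → ℚ × S) := mk_range_le
    _ = #(ℚ × S) := (mk_congr List.equivSigmaTuple.symm).trans (mk_list_eq_mk _)
    _ = #S := by simp [aleph0_mul_eq (aleph0_le_mk S)]

lemma Submodule.exists_dual_eq_one_of_notMem {X : Type u} [NormedAddCommGroup X]
    [NormedSpace ℝ X] (M : Submodule ℝ X) [IsClosed (M : Set X)] {x : X} (hx : x ∉ M) :
    ∃ f : X →L[ℝ] ℝ, f x = 1 ∧ ∀ y ∈ M, f y = 0 := by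
  obtain ⟨g, hg⟩ := SeparatingDual.exists_eq_one (R := ℝ) (x := M.mkQ x) (by simpa using hx)
  exact ⟨g.comp M.mkQL, hg, fun y hy => by simp [(Submodule.Quotient.mk_eq_zero M).mpr hy]⟩

section Biorthogonal

variable {X : Type u} [NormedAddCommGroup X] [NormedSpace ℝ X]

lemma aleph0_le_densityCard_of_not_finiteDimensional (hX : ¬ FiniteDimensional ℝ X) :
    ℵ₀ ≤ densityCard X :=
  have : Infinite X := not_finite_iff_infinite.mp fun _ => hX Module.Finite.of_finite
  aleph0_le_densityCard

lemma topologicalClosure_span_ne_top_of_mk_lt (hX : ¬ FiniteDimensional ℝ X) {S : Set X}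
    (hS : #S < densityCard X) : (Submodule.span ℝ S).topologicalClosure ≠ ⊤ := by
  intro htop
  rcases S.finite_or_infinite with hfin | hinf
  · have := FiniteDimensional.span_of_finite ℝ hfin
    rw [(Submodule.span ℝ S).closed_of_finiteDimensional.submodule_topologicalClosure_eq] at htop
    rw [htop] at this
    exact hX (Module.Finite.equiv Submodule.topEquiv)
  · have : Infinite S := hinf.to_subtype
    have hdense : Dense (Submodule.span ℝ S : Set X) := by
      simpa [dense_iff_closure_eq, ← Submodule.topologicalClosure_coe] using
        congrArg ((↑) : Submodule ℝ X → Set X) htop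
    exact (densityCard_le_mk_of_dense_span hdense).not_gt hS

lemma exists_biorthogonal_pair_of_mk_lt (hX : ¬ FiniteDimensional ℝ X) {S : Set X}
    (hS : #S < densityCard X) : ∃ (x : X) (f : X →L[ℝ] ℝ), f x = 1 ∧ ∀ y ∈ S, f y = 0 := by
  set M := (Submodule.span ℝ S).topologicalClosure
  have : IsClosed (M : Set X) := Submodule.isClosed_topologicalClosure _
  obtain ⟨x, hx⟩ : ∃ x, x ∉ M := by
    simpa [Submodule.eq_top_iff'] using topologicalClosure_span_ne_top_of_mk_lt hX hS
  obtain ⟨f, hfx, hfM⟩ := M.exists_dual_eq_one_of_notMem hx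
  exact ⟨x, f, hfx, fun y hy =>
    hfM y (Submodule.le_topologicalClosure _ (Submodule.subset_span hy))⟩

lemma exists_biorthogonal_of_mk_Iio_lt (hX : ¬ FiniteDimensional ℝ X) {ι : Type u}
    [Preorder ι] [WellFoundedLT ι] (hι : ∀ i : ι, #(Iio i) < densityCard X) :
    ∃ (x : ι → X) (f : ι → X →L[ℝ] ℝ), (∀ i, f i (x i) = 1) ∧ ∀ i j, j < i → f i (x j) = 0 := by
  choose! next dual hnext using fun (S : Set X) (hS : #S < densityCard X) =>
    exists_biorthogonal_pair_of_mk_lt hX hS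
  let x : ι → X := WellFoundedLT.fix fun i prev => next (range fun j : Iio i => prev j j.2)
  let S : ι → Set X := fun i => range fun j : Iio i => x j
  have hx : ∀ i, x i = next (S i) := WellFoundedLT.fix_eq _
  have hS : ∀ i, #(S i) < densityCard X := fun i => mk_range_le.trans_lt (hι i)
  refine ⟨x, fun i => dual (S i), fun i => hx i ▸ (hnext _ (hS i)).1, fun i j hji => ?_⟩
  exact (hnext _ (hS i)).2 _ ⟨⟨j, hji⟩, rfl⟩

lemma exists_biorthogonal_ord_toType (hX : ¬ FiniteDimensional ℝ X) {μ : Cardinal.{u}}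
    (hμX : μ ≤ densityCard X) :
    ∃ (x : μ.ord.ToType → X) (f : μ.ord.ToType → X →L[ℝ] ℝ),
      (∀ i, f i (x i) = 1) ∧ ∀ i j, j < i → f i (x j) = 0 :=
  exists_biorthogonal_of_mk_Iio_lt hX fun i =>
    (by simpa using mk_Iio_lt i : #(Iio i) < μ).trans_le hμX

end Biorthogonal

section DualBall

variable {X : Type u} [NormedAddCommGroup X] [NormedSpace ℝ X]

lemma abs_apply_le_norm_of_mem_dualBall {g : WeakDual ℝ X} (hg : g ∈ dualBall X) (z : X) :
    |g z| ≤ ‖z‖ :=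
  ((WeakDual.toStrongDual g).le_opNorm z).trans (mul_le_of_le_one_left (norm_nonneg z) hg)

lemma abs_sub_apply_le_of_mem_dualBall {f g : WeakDual ℝ X} (hf : f ∈ dualBall X)
    (hg : g ∈ dualBall X) (x y : X) : |g x - f x| ≤ |g y - f y| + 2 * ‖x - y‖ :=
  calc |g x - f x| = |(g y - f y) + (g (x - y) - f (x - y))| := by simp only [map_sub]; ring_nf
    _ ≤ |g y - f y| + (|g (x - y)| + |f (x - y)|) :=
      (abs_add_le _ _).trans (add_le_add_right (abs_sub _ _) _)
    _ ≤ |g y - f y| + (‖x - y‖ + ‖x - y‖) := by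
      gcongr
      exacts [abs_apply_le_norm_of_mem_dualBall hg _, abs_apply_le_norm_of_mem_dualBall hf _]
    _ = |g y - f y| + 2 * ‖x - y‖ := by ring

lemma exists_finset_of_mem_nhds_dualBall {D : Set X} (hD : Dense D) {f : WeakDual ℝ X}
    (hf : f ∈ dualBall X) {V : Set (WeakDual ℝ X)} (hV : V ∈ 𝓝 f) :
    ∃ t : Finset D, ∃ ε > 0, ∀ g ∈ dualBall X, (∀ d ∈ t, |g d - f d| < ε) → g ∈ V := by
  classical
  obtain ⟨s, r, hr, hsV⟩ := ((WeakDual.withSeminorms ℝ X).mem_nhds_iff f V).mp hV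
  have happrox : ∀ x : X, ∃ d : D, ‖x - d‖ < r / 4 := fun x => by
    obtain ⟨d, hd, hxd⟩ := hD.exists_dist_lt x (by positivity : 0 < r / 4)
    exact ⟨⟨d, hd⟩, by rwa [← dist_eq_norm]⟩
  choose d hd using happrox
  refine ⟨s.image d, r / 2, by positivity, fun g hg hgt => hsV ?_⟩
  refine (Seminorm.mem_ball _).mpr (Seminorm.finset_sup_apply_lt hr fun x hx => ?_)
  calc ‖(g - f) x‖ = |g x - f x| := Real.norm_eq_abs _
    _ ≤ |g (d x) - f (d x)| + 2 * ‖x - d x‖ := abs_sub_apply_le_of_mem_dualBall hf hg x (d x)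
    _ < r / 2 + 2 * (r / 4) := add_lt_add_of_lt_of_le (hgt _ (Finset.mem_image_of_mem d hx))
      (by linarith [hd x])
    _ = r := by ring

def dualBallBox (D : Set X) (s : Finset (D × ℚ × ℚ)) : Set (dualBall X) :=
  {g | ∀ p ∈ s, (g : WeakDual ℝ X) p.1 ∈ Ioo (p.2.1 : ℝ) p.2.2}

lemma isOpen_dualBallBox (D : Set X) (s : Finset (D × ℚ × ℚ)) : IsOpen (dualBallBox D s) := by
  simp only [dualBallBox, ofPred_forall]
  exact isOpen_biInter_finset fun p _ =>
    isOpen_Ioo.preimage ((WeakDual.eval_continuous _).comp continuous_subtype_val)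

lemma isTopologicalBasis_dualBallBox {D : Set X} (hD : Dense D) :
    TopologicalSpace.IsTopologicalBasis (range (dualBallBox D)) := by
  classical
  refine TopologicalSpace.isTopologicalBasis_of_isOpen_of_nhds
    (by rintro _ ⟨s, rfl⟩; exact isOpen_dualBallBox D s) ?_
  rintro ⟨f, hf⟩ U hfU hU
  obtain ⟨V, hV, rfl⟩ := isOpen_induced_iff.mp hU
  obtain ⟨t, ε, hε, htV⟩ := exists_finset_of_mem_nhds_dualBall hD hf (hV.mem_nhds hfU)
  have hrat : ∀ d : D, ∃ a b : ℚ,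
      f d - ε < a ∧ (a : ℝ) < f d ∧ f d < b ∧ (b : ℝ) < f d + ε := fun d => by
    obtain ⟨a, ha⟩ := exists_rat_btwn (sub_lt_self (f d) hε)
    obtain ⟨b, hb⟩ := exists_rat_btwn (lt_add_of_pos_right (f d) hε)
    exact ⟨a, b, ha.1, ha.2, hb.1, hb.2⟩
  choose a b hfa haf hfb hbf using hrat
  refine ⟨_, ⟨t.image fun d => (d, a d, b d), rfl⟩, ?_, ?_⟩
  · simp only [dualBallBox, Finset.forall_mem_image, mem_ofPred_eq]
    exact fun d _ => ⟨haf d, hfb d⟩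
  · rintro ⟨g, hg⟩ hgt
    refine htV g hg fun d hd => abs_sub_lt_iff.mpr ?_
    have := hgt _ (Finset.mem_image_of_mem _ hd)
    constructor <;> linarith [this.1, this.2, hfa d, hbf d]

lemma hLindelof_dualBall_le (hX : ℵ₀ ≤ densityCard X) :
    hLindelof (dualBall X) ≤ densityCard X := by
  obtain ⟨D, hD, hcard⟩ := exists_dense_mk_eq_densityCard X
  have : Infinite D := infinite_iff.mpr (hcard ▸ hX)
  calc hLindelof (dualBall X) ≤ #(Finset (D × ℚ × ℚ)) :=
        hLindelof_le_of_isTopologicalBasis (isTopologicalBasis_dualBallBox hD)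
    _ = densityCard X := by
        rw [mk_finset_of_infinite, ← hcard]
        simp [mul_aleph0_eq (aleph0_le_mk D)]

lemma le_hLindelof_dualBall_of_isRegular (hX : ¬ FiniteDimensional ℝ X) {μ : Cardinal.{u}}
    (hμ : μ.IsRegular) (hμX : μ ≤ densityCard X) : μ ≤ hLindelof (dualBall X) := by
  obtain ⟨x, f, hfx, hfx_lt⟩ := exists_biorthogonal_ord_toType hX hμX
  have hf : ∀ i, 0 < ‖f i‖ := fun i => norm_pos_iff.mpr fun h => by simpa [h] using hfx i
  let y : μ.ord.ToType → dualBall X := fun i =>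
    ⟨StrongDual.toWeakDual (‖f i‖⁻¹ • f i), mem_closedBall_zero_iff.mp
      (inv_norm_smul_mem_unitClosedBall (f i))⟩
  have hy : ∀ i j, (y i : WeakDual ℝ X) (x j) = ‖f i‖⁻¹ * f i (x j) := fun _ _ => rfl
  refine le_hLindelof_of_rightSeparated hμ y (fun j => {g | 0 < (g : WeakDual ℝ X) (x j)})
    (fun j => isOpen_lt continuous_const ((WeakDual.eval_continuous _).comp continuous_subtype_val))
    (fun i => ?_) (fun j i hji => ?_)
  · simpa [hy, hfx] using hf i
  · simp [hy, hfx_lt i j hji]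

lemma le_hLindelof_dualBall (hX : ¬ FiniteDimensional ℝ X) :
    densityCard X ≤ hLindelof (dualBall X) := by
  refine le_of_forall_lt fun c hc => ?_
  obtain ⟨μ, hμ, hcμ, hμX⟩ :=
    exists_isRegular_between (aleph0_le_densityCard_of_not_finiteDimensional hX) hc
  exact hcμ.trans_le (le_hLindelof_dualBall_of_isRegular hX hμ hμX)

end DualBall

theorem stmt19_general (X : Type u) [NormedAddCommGroup X] [NormedSpace ℝ X]
    (hX : ¬ FiniteDimensional ℝ X) :
    (∃ (x : (densityCard X).ord.ToType → X)
       (f : (densityCard X).ord.ToType → (X →L[ℝ] ℝ)),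
        (∀ α, f α (x α) = 1) ∧ ∀ α β, β < α → f α (x β) = 0) ∧
    hLindelof (dualBall X) = densityCard X := by
  have hdens := aleph0_le_densityCard_of_not_finiteDimensional hX
  exact ⟨exists_biorthogonal_ord_toType hX le_rfl,
    (hLindelof_dualBall_le hdens).antisymm (le_hLindelof_dualBall hX)⟩

/-- For an infinite-dimensional real Banach space `X` with `dens(X) = κ`,
there is a transfinite sequence `(x_α, x*_α)_{α < κ}` with `x*_α(x_α) = 1` and
`x*_α(x_β) = 0` for `β < α`. Moreover `hL(B_{X*}) = dens(X)`. -/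
theorem stmt19 (X : Type u) [NormedAddCommGroup X] [NormedSpace ℝ X] [CompleteSpace X]
    (hX : ¬ FiniteDimensional ℝ X) :
    (∃ (x : (densityCard X).ord.ToType → X)
       (f : (densityCard X).ord.ToType → (X →L[ℝ] ℝ)),
        (∀ α, f α (x α) = 1) ∧ ∀ α β, β < α → f α (x β) = 0) ∧
    hLindelof (dualBall X) = densityCard X :=
  stmt19_general X hX
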